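/- Let A ∈ ℝ^{(d+1)×m} with σ(A) = σ < ∞, θ ∈ ℝ^{d+m}, and ε > 0. Then there is a positive constant C*(A, ε), depending only on A and ε, such that for all positive integers Q and all δ > 0, N_A(Q, δ, θ) ≤ max{ π^{2m}, C*(A, ε) δ^m Q^{mσ + ε} }. -/

import Mathlib

open MeasureTheory Matrix Set
open scoped ENNReal

noncomputable section

/-- Sup-norm distance from `y ∈ ℝ^k` to the nearest integer vector. -/
def intDist {k : ℕ} (y : Fin k → ℝ) : ℝ :=
  ⨅ p : Fin k → ℤ, ‖y - (fun i => (p i : ℝ))‖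

/-- Sup norm `|q|` of an integer vector, as a real number. -/
def intNorm {k : ℕ} (q : Fin k → ℤ) : ℝ :=
  ‖(fun i => (q i : ℝ) : Fin k → ℝ)‖

/-- Solutions `q ∈ ℤ^m` of `‖A qᵀ‖ < |q|^{-w}`. -/
def diophSolutions {r m : ℕ} (A : Matrix (Fin r) (Fin m) ℝ) (w : ℝ) :
    Set (Fin m → ℤ) :=
  {q | intDist (A.mulVec fun j => (q j : ℝ)) < intNorm q ^ (-w)}

/-- The diophantine exponent `ω(A)` of a real matrix, valued in `EReal`. -/
def matExp {r m : ℕ} (A : Matrix (Fin r) (Fin m) ℝ) : EReal :=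
  sSup {x : EReal | ∃ w : ℝ, x = (w : EReal) ∧ (diophSolutions A w).Infinite}

/-- The logarithm, normalized so that `log t = 1` for `t ≤ e`. -/
def plog (t : ℝ) : ℝ := max (Real.log t) 1

/-- Solutions `q ∈ ℤ^m` of `‖A qᵀ‖ < |q|^{-ω₀} (log |q|)^{-w}`. -/
def logSolutions {r m : ℕ} (A : Matrix (Fin r) (Fin m) ℝ) (ω₀ w : ℝ) :
    Set (Fin m → ℤ) :=
  {q | intDist (A.mulVec fun j => (q j : ℝ)) <
    intNorm q ^ (-ω₀) * plog (intNorm q) ^ (-w)}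

/-- The logarithmic diophantine exponent `ω'(A)` relative to `ω₀ = ω(A)`. -/
def matLogExp {r m : ℕ} (A : Matrix (Fin r) (Fin m) ℝ) (ω₀ : ℝ) : EReal :=
  sSup {x : EReal | ∃ w : ℝ, x = (w : EReal) ∧ (logSolutions A ω₀ w).Infinite}

/-- The point `(x, x̃ A)` of the affine subspace `L_A`, where `x̃ = (1, x)`. -/
def affinePoint {d m : ℕ} (A : Matrix (Fin (d + 1)) (Fin m) ℝ) (x : Fin d → ℝ) :
    Fin (d + m) → ℝ :=
  Fin.append x (Matrix.vecMul (Fin.cons 1 x) A)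

/-- The projection to `ℝ^d` of `S_n(ψ, θ) ∩ L_A` along `(x, x̃A) ↦ x`. -/
def approxSet {d m : ℕ} (A : Matrix (Fin (d + 1)) (Fin m) ℝ) (ψ : ℕ → ℝ)
    (θ : Fin (d + m) → ℝ) : Set (Fin d → ℝ) :=
  {x | {q : ℕ | 0 < q ∧
    intDist (fun i => (q : ℝ) * affinePoint A x i - θ i) < ψ q}.Infinite}

/-- Variant of `approxSet` with the denominators restricted to a set `𝒬 ⊆ ℕ`. -/
def approxSetOn {d m : ℕ} (𝒬 : Set ℕ) (A : Matrix (Fin (d + 1)) (Fin m) ℝ)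
    (ψ : ℕ → ℝ) (θ : Fin (d + m) → ℝ) : Set (Fin d → ℝ) :=
  {x | {q : ℕ | q ∈ 𝒬 ∧ 0 < q ∧
    intDist (fun i => (q : ℝ) * affinePoint A x i - θ i) < ψ q}.Infinite}

/-- The matrix `A'` formed by the last `d` rows of `A`. -/
def matTail {d m : ℕ} (A : Matrix (Fin (d + 1)) (Fin m) ℝ) :
    Matrix (Fin d) (Fin m) ℝ :=
  Matrix.of fun i j => A i.succ j

/-- `A` is `φ`-badly approximable: `‖A qᵀ‖ ≥ φ(|q|)` for all nonzero `q ∈ ℤ^m`. -/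
def phiBadlyApprox {r m : ℕ} (A : Matrix (Fin r) (Fin m) ℝ) (φ : ℝ → ℝ) : Prop :=
  ∀ q : Fin m → ℤ, q ≠ 0 → φ (intNorm q) ≤ intDist (A.mulVec fun j => (q j : ℝ))

/-- The counting function `N_A(Q, δ, θ)`. -/
def countNA {d m : ℕ} (A : Matrix (Fin (d + 1)) (Fin m) ℝ) (Q : ℕ) (δ : ℝ)
    (θ1 : Fin d → ℝ) (θ2 : Fin m → ℝ) : ℕ :=
  Set.ncard {p : ℤ × (Fin d → ℤ) |
    intDist (Matrix.vecMul (Fin.cons (p.1 : ℝ) (fun i => (p.2 i : ℝ) + θ1 i)) A - θ2) < δ ∧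
    |p.1| < (Q : ℤ) ∧ ∀ i, |p.2 i| < (Q : ℤ)}

/-- The fixed-denominator counting function underlying `N'_A(Q, δ, θ)`. -/
def countNA' {d m : ℕ} (A : Matrix (Fin (d + 1)) (Fin m) ℝ) (Q : ℕ) (δ : ℝ)
    (θ1 : Fin d → ℝ) (θ2 : Fin m → ℝ) (q : ℝ) : ℕ :=
  Set.ncard {a : Fin d → ℤ |
    intDist (Matrix.vecMul (Fin.cons q (fun i => (a i : ℝ) + θ1 i)) A - θ2) < δ ∧
    ∀ i, |a i| < (Q : ℤ)}

/-- Distance from a real number to the nearest integer. -/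
def intDist1 (y : ℝ) : ℝ := ⨅ p : ℤ, |y - (p : ℝ)|

section IntDist

variable {k : ℕ}

lemma intDist_le {k : ℕ} (y : Fin k → ℝ) (p : Fin k → ℤ) :
    intDist y ≤ ‖y - (fun i => (p i : ℝ))‖ := by
  refine ciInf_le ⟨0, ?_⟩ p
  rintro x ⟨q, rfl⟩
  exact norm_nonneg _

lemma intDist_eq_round (y : Fin k → ℝ) :
    intDist y = ‖y - (fun i => ((round (y i) : ℤ) : ℝ))‖ := by
  refine le_antisymm (intDist_le y _) (le_ciInf fun p => ?_)
  rcases eq_or_lt_of_le (norm_nonneg (y - (fun i => ((p i : ℤ) : ℝ)))) with h | h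
  · have : y = fun i => ((p i : ℤ) : ℝ) := by
      have := (norm_eq_zero.mp h.symm)
      funext i
      have := congrFun this i
      simpa [sub_eq_zero] using this
    have hr : ∀ i, round (y i) = p i := fun i => by rw [this]; simp
    simp only [hr]
    exact le_refl _
  · rw [pi_norm_le_iff_of_nonneg (le_of_lt (by simpa using h))]
    intro i
    calc ‖(y - fun i => ((round (y i) : ℤ) : ℝ)) i‖ = |y i - round (y i)| := by simp [Real.norm_eq_abs]
    _ ≤ |y i - p i| := round_le (y i) (p i)
    _ = ‖(y - fun i => ((p i : ℤ):ℝ)) i‖ := by simp [Real.norm_eq_abs]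
    _ ≤ _ := norm_le_pi_norm _ i

lemma intDist_nonneg (y : Fin k → ℝ) : 0 ≤ intDist y := by
  rw [intDist_eq_round]; exact norm_nonneg _

lemma intDist_le_half (y : Fin k → ℝ) : intDist y ≤ 1 / 2 := by
  rw [intDist_eq_round]
  rw [pi_norm_le_iff_of_nonneg (by norm_num)]
  intro i
  simpa [Real.norm_eq_abs] using abs_sub_round (y i)

lemma intDist_sub_le (x y : Fin k → ℝ) : intDist (x - y) ≤ intDist x + intDist y := by
  calc intDist (x - y)
      ≤ ‖(x - y) - (fun i => (((round (x i) - round (y i) : ℤ)) : ℝ))‖ := intDist_le _ _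
    _ = ‖(x - fun i => ((round (x i) : ℤ) : ℝ)) - (y - fun i => ((round (y i) : ℤ) : ℝ))‖ := by
        congr 1; funext i; simp only [Pi.sub_apply]; push_cast; ring
    _ ≤ _ := by
        rw [intDist_eq_round x, intDist_eq_round y]
        exact norm_sub_le _ _

lemma eq_int_of_intDist_eq_zero {y : Fin k → ℝ} (h : intDist y = 0) :
    y = fun i => ((round (y i) : ℤ) : ℝ) := by
  rw [intDist_eq_round] at h
  have := norm_eq_zero.mp h
  funext i
  have := congrFun this i
  simpa [sub_eq_zero] using this

lemma intDist_lt_of_forall {y : Fin k → ℝ} {p : Fin k → ℤ} {r : ℝ} (hr : 0 < r)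
    (h : ∀ i, |y i - (p i : ℝ)| < r) : intDist y < r := by
  refine lt_of_le_of_lt (intDist_le y p) ?_
  rw [pi_norm_lt_iff hr]
  intro i
  simpa [Real.norm_eq_abs] using h i

lemma coord_le_of_intDist {y : Fin k → ℝ} {r : ℝ} (h : intDist y < r) :
    ∀ i, |y i - (round (y i) : ℝ)| < r := by
  intro i
  rw [intDist_eq_round] at h
  refine lt_of_le_of_lt ?_ h
  simpa [Real.norm_eq_abs] using norm_le_pi_norm (y - fun i => ((round (y i):ℤ):ℝ)) i

end IntDist

section IntNorm

variable {k : ℕ}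

lemma intNorm_nonneg (q : Fin k → ℤ) : 0 ≤ intNorm q := norm_nonneg _

lemma one_le_intNorm {q : Fin k → ℤ} (hq : q ≠ 0) : 1 ≤ intNorm q := by
  obtain ⟨i, hi⟩ : ∃ i, q i ≠ 0 := by
    by_contra h
    push_neg at h
    exact hq (funext h)
  calc (1:ℝ) ≤ |(q i : ℝ)| := by
        rw [← Int.cast_abs]
        exact_mod_cast Int.one_le_abs hi
    _ ≤ intNorm q := by
        simpa [Real.norm_eq_abs, intNorm] using norm_le_pi_norm (fun i => ((q i : ℤ) : ℝ)) i

lemma intNorm_pos {q : Fin k → ℤ} (hq : q ≠ 0) : 0 < intNorm q :=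
  lt_of_lt_of_le one_pos (one_le_intNorm hq)

lemma intNorm_le_of_forall {q : Fin k → ℤ} {R : ℝ} (hR : 0 ≤ R) (h : ∀ i, |(q i : ℝ)| ≤ R) :
    intNorm q ≤ R := by
  rw [intNorm, pi_norm_le_iff_of_nonneg hR]
  intro i
  simpa [Real.norm_eq_abs] using h i

lemma rpow_neg_anti {x y w : ℝ} (hx : 0 < x) (hxy : x ≤ y) (hw : 0 ≤ w) :
    y ^ (-w) ≤ x ^ (-w) := by
  rw [Real.rpow_neg (le_of_lt hx), Real.rpow_neg (le_of_lt (lt_of_lt_of_le hx hxy))]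
  exact inv_anti₀ (Real.rpow_pos_of_pos hx w) (Real.rpow_le_rpow (le_of_lt hx) hxy hw)

end IntNorm

section Dioph

variable {r k : ℕ}

lemma intDist_zero_fun : intDist (0 : Fin k → ℝ) = 0 := by
  refine le_antisymm ?_ (intDist_nonneg _)
  have h := intDist_le (0 : Fin k → ℝ) 0
  have h2 : ((0 : Fin k → ℝ) - fun i => (((0 : Fin k → ℤ) i : ℤ) : ℝ)) = 0 := by
    funext i; simp
  rw [h2, norm_zero] at h
  exact h

lemma zero_not_mem_dioph {B : Matrix (Fin r) (Fin k) ℝ} {w : ℝ} (hw : w ≠ 0) :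
    (0 : Fin k → ℤ) ∉ diophSolutions B w := by
  intro h
  simp only [diophSolutions, Set.mem_setOf_eq] at h
  have h2 : (fun j => (((0 : Fin k → ℤ) j : ℤ) : ℝ)) = (0 : Fin k → ℝ) := by
    funext j; simp
  have h1 : intNorm (0 : Fin k → ℤ) = 0 := by
    simp only [intNorm]
    rw [show (fun i => (((0 : Fin k → ℤ) i : ℤ) : ℝ)) = (0 : Fin k → ℝ) from h2]
    simp
  rw [h1, h2, Matrix.mulVec_zero, Real.zero_rpow (neg_ne_zero.mpr hw)] at h
  have h3 : intDist (0 : Fin r → ℝ) = 0 := intDist_zero_fun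
  rw [h3] at h
  exact lt_irrefl 0 h

lemma infinite_of_intDist_eq_zero {B : Matrix (Fin r) (Fin k) ℝ} {w : ℝ} {p : Fin k → ℤ}
    (hp : p ≠ 0) (h0 : intDist (B.mulVec fun j => (p j : ℝ)) = 0) :
    (diophSolutions B w).Infinite := by
  obtain ⟨i0, hi0⟩ : ∃ i, p i ≠ 0 := by
    by_contra h; push_neg at h; exact hp (funext h)
  have key : ∀ t : ℕ, ((t + 1 : ℤ) • p) ∈ diophSolutions B w := by
    intro t
    have hq0 : ((t + 1 : ℤ) • p) ≠ 0 := by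
      intro h
      have := congrFun h i0
      simp only [Pi.smul_apply, smul_eq_mul, Pi.zero_apply, mul_eq_zero] at this
      rcases this with h | h
      · omega
      · exact hi0 h
    have hcast : (fun j => ((((t + 1 : ℤ) • p) j : ℤ) : ℝ))
        = ((t + 1 : ℝ)) • fun j => ((p j : ℤ) : ℝ) := by
      funext j; simp only [Pi.smul_apply, smul_eq_mul]; push_cast; ring
    have hv := eq_int_of_intDist_eq_zero h0
    set v := B.mulVec fun j => ((p j : ℤ) : ℝ) with hvdef
    have hmul : B.mulVec (fun j => ((((t + 1 : ℤ) • p) j : ℤ) : ℝ)) = (t + 1 : ℝ) • v := by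
      rw [hcast, Matrix.mulVec_smul]
    have hzero : intDist ((t + 1 : ℝ) • v) = 0 := by
      refine le_antisymm ?_ (intDist_nonneg _)
      have hle := intDist_le ((t + 1 : ℝ) • v) (fun i => (t + 1 : ℤ) * round (v i))
      have : ((t + 1 : ℝ) • v - fun i => (((t + 1 : ℤ) * round (v i) : ℤ) : ℝ)) = 0 := by
        funext i
        have hvi := congrFun hv i
        simp only [Pi.sub_apply, Pi.smul_apply, smul_eq_mul, Pi.zero_apply]
        rw [hvi]
        simp only [round_intCast]
        push_cast
        ring
      rw [this] at hle
      simpa using hle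
    simp only [diophSolutions, Set.mem_setOf_eq]
    rw [hmul, hzero]
    exact Real.rpow_pos_of_pos (intNorm_pos hq0) _
  refine Set.infinite_of_injective_forall_mem
    (f := fun t : ℕ => ((t + 1 : ℤ) • p : Fin k → ℤ)) ?_ key
  intro s t hst
  have h1 := congrFun hst i0
  simp only [Pi.smul_apply, smul_eq_mul] at h1
  have h2 := mul_right_cancel₀ hi0 h1
  omega

lemma finite_of_exp_lt {B : Matrix (Fin r) (Fin k) ℝ} {σ w : ℝ}
    (hσ : matExp B = (σ : EReal)) (hw : σ < w) : (diophSolutions B w).Finite := by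
  by_contra h
  have hle : (w : EReal) ≤ matExp B := le_sSup ⟨w, rfl, h⟩
  rw [hσ] at hle
  exact absurd (EReal.coe_le_coe_iff.mp hle) (not_le.mpr hw)

lemma exists_dioph_const {B : Matrix (Fin r) (Fin k) ℝ} {σ w : ℝ}
    (hσ : matExp B = (σ : EReal)) (hw0 : 0 < w) (hwσ : σ < w) :
    ∃ c : ℝ, 0 < c ∧ c ≤ 1 ∧ ∀ z : Fin k → ℤ, z ≠ 0 →
      c * intNorm z ^ (-w) ≤ intDist (B.mulVec fun j => (z j : ℝ)) := by
  have hfin := finite_of_exp_lt hσ hwσ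
  set f : (Fin k → ℤ) → ℝ := fun z => intDist (B.mulVec fun j => (z j : ℝ)) * intNorm z ^ w
    with hf
  set F := hfin.toFinset with hF
  have hout : ∀ z : Fin k → ℤ, z ≠ 0 → z ∉ diophSolutions B w →
      intNorm z ^ (-w) ≤ intDist (B.mulVec fun j => (z j : ℝ)) := by
    intro z hz hzS
    simp only [diophSolutions, Set.mem_setOf_eq, not_lt] at hzS
    exact hzS
  have hpos : ∀ z ∈ F, 0 < f z := by
    intro z hzF
    have hzS : z ∈ diophSolutions B w := hfin.mem_toFinset.mp hzF
    have hz0 : z ≠ 0 := by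
      intro h; rw [h] at hzS; exact zero_not_mem_dioph (ne_of_gt hw0) hzS
    have hd : 0 < intDist (B.mulVec fun j => (z j : ℝ)) := by
      rcases lt_or_eq_of_le (intDist_nonneg (B.mulVec fun j => (z j : ℝ))) with h | h
      · exact h
      · exact absurd (infinite_of_intDist_eq_zero (w := w) hz0 h.symm) hfin.not_infinite
    exact mul_pos hd (Real.rpow_pos_of_pos (intNorm_pos hz0) _)
  by_cases hne : F.Nonempty
  · refine ⟨min 1 (F.inf' hne f), lt_min one_pos ((Finset.lt_inf'_iff hne).mpr hpos),
      min_le_left _ _, ?_⟩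
    intro z hz
    have hnp : 0 < intNorm z := intNorm_pos hz
    have hpow : (0:ℝ) < intNorm z ^ (-w) := Real.rpow_pos_of_pos hnp _
    by_cases hzS : z ∈ diophSolutions B w
    · have h1 : min 1 (F.inf' hne f) ≤ f z :=
        le_trans (min_le_right _ _) (Finset.inf'_le f (hfin.mem_toFinset.mpr hzS))
      calc min 1 (F.inf' hne f) * intNorm z ^ (-w) ≤ f z * intNorm z ^ (-w) :=
            mul_le_mul_of_nonneg_right h1 hpow.le
        _ = intDist (B.mulVec fun j => (z j : ℝ)) * (intNorm z ^ w * intNorm z ^ (-w)) := by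
            rw [hf]; ring
        _ = intDist (B.mulVec fun j => (z j : ℝ)) := by
            rw [← Real.rpow_add hnp]; norm_num
    · calc min 1 (F.inf' hne f) * intNorm z ^ (-w) ≤ 1 * intNorm z ^ (-w) :=
          mul_le_mul_of_nonneg_right (min_le_left _ _) hpow.le
        _ = intNorm z ^ (-w) := one_mul _
        _ ≤ _ := hout z hz hzS
  · refine ⟨1, one_pos, le_refl _, ?_⟩
    intro z hz
    have hzS : z ∉ diophSolutions B w := by
      intro h
      exact hne ⟨z, hfin.mem_toFinset.mpr h⟩
    rw [one_mul]
    exact hout z hz hzS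

end Dioph

section Dirichlet

lemma dirichlet_box {mm nn : ℕ} (B : Matrix (Fin mm) (Fin nn) ℝ) (Q N : ℕ)
    (hN : 0 < N) (hcard : N ^ mm < (Q + 1) ^ nn) :
    ∃ p : Fin nn → ℤ, p ≠ 0 ∧ (∀ i, |p i| ≤ (Q : ℤ)) ∧
      intDist (B.mulVec fun j => (p j : ℝ)) < 1 / N := by
  set x : (Fin nn → Fin (Q + 1)) → Fin mm → ℝ :=
    fun q => B.mulVec fun j => ((q j : ℕ) : ℝ) with hx
  have hfr : ∀ (q : Fin nn → Fin (Q+1)) (i : Fin mm), (⌊Int.fract (x q i) * N⌋).toNat < N := by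
    intro q i
    have h1 : Int.fract (x q i) < 1 := Int.fract_lt_one _
    have h2 : Int.fract (x q i) * N < N := by
      calc Int.fract (x q i) * N < 1 * N := by
            apply mul_lt_mul_of_pos_right h1; exact_mod_cast hN
        _ = N := one_mul _
    have h3 : ⌊Int.fract (x q i) * N⌋ < (N:ℤ) := Int.floor_lt.mpr (by exact_mod_cast h2)
    omega
  set f : (Fin nn → Fin (Q + 1)) → (Fin mm → Fin N) :=
    fun q i => ⟨(⌊Int.fract (x q i) * N⌋).toNat, hfr q i⟩ with hfdef
  have hcard' : Fintype.card (Fin mm → Fin N) < Fintype.card (Fin nn → Fin (Q+1)) := by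
    simpa [Fintype.card_fun] using hcard
  obtain ⟨q, q', hqq, hf⟩ := Fintype.exists_ne_map_eq_of_card_lt f hcard'
  have hNpos : (0:ℝ) < N := by exact_mod_cast hN
  refine ⟨fun j => (q j : ℤ) - (q' j : ℤ), ?_, ?_, ?_⟩
  · intro h
    apply hqq
    funext j
    have h1 := congrFun h j
    simp only [Pi.zero_apply] at h1
    have h2 : ((q j : ℕ) : ℤ) = ((q' j : ℕ) : ℤ) := by omega
    exact Fin.ext (by exact_mod_cast h2)
  · intro j
    have h1 : (q j : ℕ) < Q + 1 := (q j).isLt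
    have h2 : (q' j : ℕ) < Q + 1 := (q' j).isLt
    show |(q j : ℤ) - (q' j : ℤ)| ≤ (Q : ℤ)
    rw [abs_le]
    omega
  · have hxy : (B.mulVec fun j => (((fun j => (q j : ℤ) - (q' j : ℤ)) j : ℤ) : ℝ))
        = x q - x q' := by
      rw [hx]
      rw [show (fun j => (((fun j => (q j : ℤ) - (q' j : ℤ)) j : ℤ) : ℝ))
          = (fun j => ((q j : ℕ) : ℝ)) - (fun j => ((q' j : ℕ) : ℝ)) from by
        funext j; simp only [Pi.sub_apply]; push_cast; ring]
      exact Matrix.mulVec_sub _ _ _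
    rw [hxy]
    apply intDist_lt_of_forall (p := fun i => ⌊x q i⌋ - ⌊x q' i⌋) (by positivity)
    intro i
    have hfl : ⌊Int.fract (x q i) * N⌋ = ⌊Int.fract (x q' i) * N⌋ := by
      have h1 := congrFun hf i
      simp only [hfdef] at h1
      have h2 : (⌊Int.fract (x q i) * N⌋).toNat = (⌊Int.fract (x q' i) * N⌋).toNat :=
        congrArg Fin.val h1
      have h3 : (0:ℤ) ≤ ⌊Int.fract (x q i) * N⌋ := Int.floor_nonneg.mpr (mul_nonneg (Int.fract_nonneg _) (by positivity))
      have h4 : (0:ℤ) ≤ ⌊Int.fract (x q' i) * N⌋ := Int.floor_nonneg.mpr (mul_nonneg (Int.fract_nonneg _) (by positivity))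
      omega
    have key : |Int.fract (x q i) - Int.fract (x q' i)| < 1 / N := by
      rw [lt_div_iff₀ hNpos]
      have ha1 : (⌊Int.fract (x q i) * N⌋ : ℝ) ≤ Int.fract (x q i) * N := Int.floor_le _
      have ha2 : Int.fract (x q i) * N < ⌊Int.fract (x q i) * N⌋ + 1 := Int.lt_floor_add_one _
      have hb1 : (⌊Int.fract (x q' i) * N⌋ : ℝ) ≤ Int.fract (x q' i) * N := Int.floor_le _
      have hb2 : Int.fract (x q' i) * N < ⌊Int.fract (x q' i) * N⌋ + 1 := Int.lt_floor_add_one _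
      rw [hfl] at ha1 ha2
      have : |Int.fract (x q i) * N - Int.fract (x q' i) * N| < 1 :=
        abs_sub_lt_iff.mpr ⟨by linarith, by linarith⟩
      calc |Int.fract (x q i) - Int.fract (x q' i)| * N
          = |Int.fract (x q i) - Int.fract (x q' i)| * |(N:ℝ)| := by rw [abs_of_pos hNpos]
        _ = |(Int.fract (x q i) - Int.fract (x q' i)) * N| := (abs_mul _ _).symm
        _ = |Int.fract (x q i) * N - Int.fract (x q' i) * N| := by rw [sub_mul]
        _ < 1 := this
    refine lt_of_le_of_lt (le_of_eq ?_) key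
    rw [Int.fract, Int.fract]
    simp only [Pi.sub_apply]
    push_cast
    ring_nf

lemma sigma_lower {mm nn : ℕ} (hm : 1 ≤ mm) (hn : 1 ≤ nn) (B : Matrix (Fin mm) (Fin nn) ℝ)
    {σ : ℝ} (hσ : matExp B = (σ : EReal)) : (nn : ℝ) / mm ≤ σ := by
  have hmm : (0:ℝ) < mm := by exact_mod_cast hm
  have hnn : (0:ℝ) < nn := by exact_mod_cast hn
  have hinf : ∀ w : ℝ, 0 < w → w < (nn : ℝ) / mm → (diophSolutions B w).Infinite := by
    intro w hw0 hw
    by_contra hfin'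
    rw [Set.not_infinite] at hfin'
    by_cases hzero : ∃ p : Fin nn → ℤ, p ≠ 0 ∧ intDist (B.mulVec fun j => (p j : ℝ)) = 0
    · obtain ⟨p, hp, h0⟩ := hzero
      exact (infinite_of_intDist_eq_zero (w := w) hp h0) hfin'
    push_neg at hzero
    set g : (Fin nn → ℤ) → ℝ := fun z => intDist (B.mulVec fun j => (z j : ℝ)) with hg
    set F := hfin'.toFinset with hF
    set μ : ℝ := if hne : F.Nonempty then F.inf' hne g else 1 with hμ
    have hμpos : 0 < μ := by
      rw [hμ]
      split_ifs with hne
      · rw [Finset.lt_inf'_iff]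
        intro z hzF
        have hzS : z ∈ diophSolutions B w := hfin'.mem_toFinset.mp hzF
        have hz0 : z ≠ 0 := by
          intro h; rw [h] at hzS; exact zero_not_mem_dioph (ne_of_gt hw0) hzS
        exact lt_of_le_of_ne (intDist_nonneg _) (Ne.symm (hzero z hz0))
      · exact one_pos
    have hμle : ∀ z ∈ F, μ ≤ g z := by
      intro z hz
      rw [hμ, dif_pos ⟨z, hz⟩]
      exact Finset.inf'_le g hz
    set K : ℝ := 1 / μ + 3 with hK
    have hK0 : 0 < K := by positivity
    set e : ℝ := nn - w * mm with he
    have he0 : 0 < e := by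
      rw [he]
      have := (lt_div_iff₀ hmm).mp hw
      linarith
    obtain ⟨Q, hQR⟩ := exists_nat_gt (max 1 (((1 + K) ^ mm) ^ (1 / e)))
    have hQ1 : (1:ℝ) ≤ Q := le_of_lt (lt_of_le_of_lt (le_max_left _ _) hQR)
    have hQ0 : (0:ℝ) < Q := lt_of_lt_of_le one_pos hQ1
    have hQpow : ((1 + K) ^ mm : ℝ) < (Q:ℝ) ^ e := by
      have hX0 : (0:ℝ) ≤ (1 + K) ^ mm := by positivity
      have h1 : ((1 + K) ^ mm : ℝ) = (((1 + K) ^ mm) ^ (1/e)) ^ e := by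
        rw [← Real.rpow_mul hX0, one_div_mul_cancel (ne_of_gt he0), Real.rpow_one]
      rw [h1]
      apply Real.rpow_lt_rpow (by positivity) _ he0
      exact lt_of_le_of_lt (le_max_right _ _) hQR
    set N : ℕ := ⌈(Q:ℝ) ^ w⌉₊ + ⌈1 / μ⌉₊ + 1 with hN
    have hN0 : 0 < N := by omega
    have hQw1 : (1:ℝ) ≤ (Q:ℝ) ^ w := Real.one_le_rpow hQ1 (le_of_lt hw0)
    have hQw0 : (0:ℝ) < (Q:ℝ) ^ w := lt_of_lt_of_le one_pos hQw1
    have hNge : (Q:ℝ) ^ w ≤ N := by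
      have := Nat.le_ceil ((Q:ℝ) ^ w)
      have h2 : (⌈(Q:ℝ) ^ w⌉₊ : ℝ) ≤ N := by
        rw [hN]; push_cast; linarith [Nat.cast_nonneg (α := ℝ) ⌈1/μ⌉₊]
      linarith
    have hNle : (N:ℝ) ≤ (Q:ℝ) ^ w + K := by
      rw [hN, hK]
      push_cast
      have h1 : (⌈(Q:ℝ) ^ w⌉₊ : ℝ) < (Q:ℝ) ^ w + 1 := Nat.ceil_lt_add_one (by positivity)
      have h2 : (⌈1/μ⌉₊ : ℝ) < 1/μ + 1 := Nat.ceil_lt_add_one (by positivity)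
      linarith
    have hcard : N ^ mm < (Q + 1) ^ nn := by
      have hreal : ((N:ℝ)) ^ mm < ((Q:ℝ) + 1) ^ nn := by
        calc ((N:ℝ)) ^ mm ≤ ((Q:ℝ) ^ w + K) ^ mm := by
              apply pow_le_pow_left₀ (by positivity) hNle
          _ ≤ ((1 + K) * (Q:ℝ) ^ w) ^ mm := by
              apply pow_le_pow_left₀ (by positivity)
              rw [add_mul, one_mul]
              have : K ≤ K * (Q:ℝ) ^ w := le_mul_of_one_le_right (le_of_lt hK0) hQw1
              linarith
          _ = (1 + K) ^ mm * ((Q:ℝ) ^ w) ^ mm := mul_pow _ _ _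
          _ < (Q:ℝ) ^ e * ((Q:ℝ) ^ w) ^ mm := by
              apply mul_lt_mul_of_pos_right hQpow (by positivity)
          _ = (Q:ℝ) ^ e * (Q:ℝ) ^ (w * mm) := by
              rw [← Real.rpow_natCast ((Q:ℝ) ^ w) mm, ← Real.rpow_mul (le_of_lt hQ0)]
          _ = (Q:ℝ) ^ ((nn : ℝ)) := by
              rw [← Real.rpow_add hQ0, he]; ring_nf
          _ = (Q:ℝ) ^ (nn : ℕ) := Real.rpow_natCast _ _
          _ ≤ ((Q:ℝ) + 1) ^ nn := by
              apply pow_le_pow_left₀ (le_of_lt hQ0)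
              linarith
      exact_mod_cast hreal
    obtain ⟨p, hp0, hpQ, hpd⟩ := dirichlet_box B Q N hN0 hcard
    have hnormle : intNorm p ≤ (Q:ℝ) := by
      apply intNorm_le_of_forall (le_of_lt hQ0)
      intro i
      rw [← Int.cast_abs]
      exact_mod_cast hpQ i
    have hmem : p ∈ diophSolutions B w := by
      simp only [diophSolutions, Set.mem_setOf_eq]
      refine lt_of_lt_of_le hpd ?_
      calc (1:ℝ)/N ≤ 1/((Q:ℝ) ^ w) := by
            apply one_div_le_one_div_of_le hQw0 hNge
        _ = (Q:ℝ) ^ (-w) := by rw [Real.rpow_neg (le_of_lt hQ0), one_div]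
        _ ≤ intNorm p ^ (-w) := rpow_neg_anti (intNorm_pos hp0) hnormle (le_of_lt hw0)
    have hpF : p ∈ F := hfin'.mem_toFinset.mpr hmem
    have h1 : μ ≤ g p := hμle p hpF
    have h2 : (1:ℝ)/N < μ := by
      rw [div_lt_iff₀ (by exact_mod_cast hN0)]
      have h3 : 1/μ < (N:ℝ) := by
        have h4 : (1/μ : ℝ) ≤ ⌈1/μ⌉₊ := Nat.le_ceil _
        have h5 : (⌈1/μ⌉₊ : ℝ) < N := by rw [hN]; push_cast; linarith [Nat.cast_nonneg (α := ℝ) ⌈(Q:ℝ)^w⌉₊]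
        linarith
      calc (1:ℝ) = μ * (1/μ) := by field_simp
        _ < μ * N := by apply mul_lt_mul_of_pos_left h3 hμpos
    have := lt_trans (lt_of_lt_of_le hpd (le_of_eq rfl)) h2
    rw [hg] at h1
    linarith [hpd, h1, h2]
  by_contra hcon
  push_neg at hcon
  have h0 : (0:ℝ) < (nn:ℝ)/mm := by positivity
  obtain ⟨w, hw1, hw2⟩ := exists_between (max_lt hcon h0)
  have hwinf := hinf w (lt_of_le_of_lt (le_max_right σ 0) hw1) hw2
  have hle : (w : EReal) ≤ matExp B := le_sSup ⟨w, rfl, hwinf⟩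
  rw [hσ] at hle
  have : w ≤ σ := EReal.coe_le_coe_iff.mp hle
  have : σ < w := lt_of_le_of_lt (le_max_left σ 0) hw1
  linarith

end Dirichlet

section Packing

lemma packing_lemma {n : ℕ} {ι : Type} (F : Finset ι) (c : ι → Fin n → ℝ)
    (w : Fin n → ℝ) (lam : ℝ) (hlam : 0 < lam) (hlam1 : lam ≤ 1)
    (hw : ∀ i, 0 < w i) (hc : ∀ p ∈ F, ∀ i, |c p i| < w i)
    (hsep : ∀ p ∈ F, ∀ q ∈ F, p ≠ q → ∃ i, lam * w i ≤ |c p i - c q i|) :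
    (F.card : ℝ) * ∏ i, (lam * w i) ≤ ∏ i, (3 * w i) := by
  set B : ι → Set (Fin n → ℝ) := fun p => Set.pi Set.univ fun i =>
    Set.Ioo (c p i - lam * w i / 2) (c p i + lam * w i / 2) with hB
  have hmeas : ∀ p, MeasurableSet (B p) := fun p =>
    MeasurableSet.univ_pi fun i => measurableSet_Ioo
  have hvol : ∀ p, volume (B p) = ∏ i, ENNReal.ofReal (lam * w i) := by
    intro p
    rw [hB, volume_pi_pi]
    congr 1
    funext i
    rw [Real.volume_Ioo]
    congr 1
    ring
  have hdisj : (↑F : Set ι).PairwiseDisjoint B := by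
    intro p hp q hq hpq
    rw [Function.onFun, Set.disjoint_left]
    intro y hyp hyq
    obtain ⟨i, hi⟩ := hsep p hp q hq hpq
    have h1 := hyp i (Set.mem_univ i)
    have h2 := hyq i (Set.mem_univ i)
    simp only [Set.mem_Ioo] at h1 h2
    have e1 : |c p i - y i| < lam * w i / 2 := abs_lt.mpr ⟨by linarith, by linarith⟩
    have e2 : |y i - c q i| < lam * w i / 2 := abs_lt.mpr ⟨by linarith, by linarith⟩
    have e3 : |c p i - c q i| ≤ |c p i - y i| + |y i - c q i| := abs_sub_le _ _ _
    linarith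
  have hsub : (⋃ p ∈ F, B p) ⊆
      Set.pi Set.univ fun i => Set.Ioo (-(3/2 * w i)) (3/2 * w i) := by
    intro y hy
    simp only [Set.mem_iUnion] at hy
    obtain ⟨p, hp, hyp⟩ := hy
    intro i _
    have h1 := hyp i (Set.mem_univ i)
    simp only [Set.mem_Ioo] at h1 ⊢
    have h2 := abs_lt.mp (hc p hp i)
    have h3 : 0 < w i := hw i
    have h4 : lam * w i ≤ w i := mul_le_of_le_one_left h3.le hlam1
    constructor <;> [linarith; linarith]
  have hsum : ∑ p ∈ F, volume (B p) ≤
      volume (Set.pi Set.univ fun i => Set.Ioo (-(3/2 * w i)) (3/2 * w i)) := by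
    rw [← measure_biUnion_finset hdisj (fun p _ => hmeas p)]
    exact measure_mono hsub
  rw [volume_pi_pi] at hsum
  have hRHS : ∀ i : Fin n, volume (Set.Ioo (-(3/2 * w i)) (3/2 * w i))
      = ENNReal.ofReal (3 * w i) := by
    intro i
    rw [Real.volume_Ioo]
    congr 1
    ring
  simp only [hvol, hRHS, Finset.sum_const, nsmul_eq_mul] at hsum
  have hofr1 : (∏ i, ENNReal.ofReal (lam * w i)) = ENNReal.ofReal (∏ i, (lam * w i)) := by
    rw [ENNReal.ofReal_prod_of_nonneg]
    intro i _
    exact mul_nonneg hlam.le (hw i).le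
  have hofr2 : (∏ i, ENNReal.ofReal (3 * w i)) = ENNReal.ofReal (∏ i, (3 * w i)) := by
    rw [ENNReal.ofReal_prod_of_nonneg]
    intro i _
    exact mul_nonneg (by norm_num) (hw i).le
  rw [hofr1, hofr2, ← ENNReal.ofReal_natCast F.card,
    ← ENNReal.ofReal_mul (Nat.cast_nonneg _)] at hsum
  exact (ENNReal.ofReal_le_ofReal_iff (Finset.prod_nonneg fun i _ => mul_nonneg (by norm_num) (hw i).le)).mp hsum

end Packing

section MainAux

variable {d m : ℕ}

lemma vecMul_diff (A : Matrix (Fin (d+1)) (Fin m) ℝ) (θ1 : Fin d → ℝ) (θ2 : Fin m → ℝ)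
    (p p' : ℤ × (Fin d → ℤ)) :
    (Matrix.vecMul (Fin.cons (p.1 : ℝ) (fun i => (p.2 i : ℝ) + θ1 i)) A - θ2)
      - (Matrix.vecMul (Fin.cons (p'.1 : ℝ) (fun i => (p'.2 i : ℝ) + θ1 i)) A - θ2)
    = Matrix.vecMul
        (fun j => ((Fin.cons (p.1 - p'.1) (fun i => p.2 i - p'.2 i) : Fin (d+1) → ℤ) j : ℝ)) A := by
  have h : (fun j => ((Fin.cons (p.1 - p'.1) (fun i => p.2 i - p'.2 i) : Fin (d+1) → ℤ) j : ℝ))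
      = (Fin.cons ((p.1 : ℝ)) (fun i => (p.2 i : ℝ) + θ1 i))
        - (Fin.cons ((p'.1 : ℝ)) (fun i => (p'.2 i : ℝ) + θ1 i)) := by
    funext j
    refine Fin.cases ?_ ?_ j
    · simp only [Fin.cons_zero, Pi.sub_apply]
      push_cast
      ring
    · intro i
      simp only [Fin.cons_succ, Pi.sub_apply]
      push_cast
      ring
  rw [h, Matrix.sub_vecMul]
  abel

lemma cons_diff_ne_zero {p p' : ℤ × (Fin d → ℤ)} (h : p ≠ p') :
    (Fin.cons (p.1 - p'.1) (fun i => p.2 i - p'.2 i) : Fin (d+1) → ℤ) ≠ 0 := by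
  intro hz
  apply h
  have h0 := congrFun hz 0
  simp only [Fin.cons_zero, Pi.zero_apply] at h0
  have hs : ∀ i, p.2 i - p'.2 i = 0 := by
    intro i
    have := congrFun hz i.succ
    simpa [Fin.cons_succ] using this
  obtain ⟨p1, p2⟩ := p
  obtain ⟨p1', p2'⟩ := p'
  simp only [Prod.mk.injEq]
  refine ⟨by simp at h0; omega, funext fun i => ?_⟩
  have := hs i
  simp at this ⊢
  omega

lemma append_forall₂ {k l : ℕ} (P : ℝ → ℝ → Prop) (u1 : Fin k → ℝ) (u2 : Fin l → ℝ)
    (v1 : Fin k → ℝ) (v2 : Fin l → ℝ)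
    (h1 : ∀ i, P (u1 i) (v1 i)) (h2 : ∀ j, P (u2 j) (v2 j)) :
    ∀ i, P (Fin.append u1 u2 i) (Fin.append v1 v2 i) := by
  intro i
  refine Fin.addCases (motive := fun i => P (Fin.append u1 u2 i) (Fin.append v1 v2 i))
    (fun i => ?_) (fun j => ?_) i
  · simpa only [Fin.append_left] using h1 i
  · simpa only [Fin.append_right] using h2 j

end MainAux


set_option maxHeartbeats 1000000 in
/-- **Theorem 3.4.** If `σ(A) = σ < ∞`, then for any `ε > 0` there is `C*(A, ε) > 0`
such that `N_A(Q, δ, θ) ≤ max{π^{2m}, C*(A,ε) δ^m Q^{mσ+ε}}` for all `Q ∈ ℕ`, `δ > 0`. -/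
theorem counting_upper_bound_sigma {d m : ℕ} (hm : 1 ≤ m)
    (A : Matrix (Fin (d + 1)) (Fin m) ℝ) (σ : ℝ) (hσ : matExp Aᵀ = (σ : EReal))
    (θ1 : Fin d → ℝ) (θ2 : Fin m → ℝ) (ε : ℝ) (hε : 0 < ε) :
    ∃ C : ℝ, 0 < C ∧ ∀ Q : ℕ, 0 < Q → ∀ δ : ℝ, 0 < δ →
      (countNA A Q δ θ1 θ2 : ℝ) ≤
        max (Real.pi ^ (2 * m)) (C * δ ^ m * (Q : ℝ) ^ ((m : ℝ) * σ + ε)) := by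
  have hm0 : (0:ℝ) < m := by exact_mod_cast hm
  have hDir : ((d+1 : ℕ) : ℝ) / m ≤ σ := sigma_lower hm (by omega) Aᵀ hσ
  have hmσ : (d + 1 : ℝ) ≤ (m:ℝ) * σ := by
    rw [div_le_iff₀ hm0] at hDir
    push_cast at hDir
    linarith
  have hσ0 : 0 < σ := by
    by_contra hcon
    push_neg at hcon
    have hle : (m:ℝ) * σ ≤ 0 := mul_nonpos_iff.mpr (Or.inl ⟨hm0.le, hcon⟩)
    linarith
  set w : ℝ := σ + ε / (2 * m) with hwdef
  have hw0 : 0 < w := by positivity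
  have hwσ : σ < w := by
    have h := div_pos hε (by positivity : (0:ℝ) < 2*m)
    rw [hwdef]
    linarith
  have hwm : w * (m:ℝ) = (m:ℝ) * σ + ε / 2 := by
    rw [hwdef]
    field_simp
  obtain ⟨c, hc0, hcle1, hcbad⟩ := exists_dioph_const (B := Aᵀ) hσ hw0 hwσ
  have hbad : ∀ z : Fin (d+1) → ℤ, z ≠ 0 →
      c * intNorm z ^ (-w) ≤ intDist (Matrix.vecMul (fun j => (z j : ℝ)) A) := by
    intro z hz
    have := hcbad z hz
    rwa [Matrix.mulVec_transpose] at this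
  set n' : ℕ := d + 1 + m with hn'
  have hβm : ((n' : ℝ)) ≤ (m:ℝ) * (1 + w) := by
    have he : (m:ℝ) * (1 + w) = m + w * m := by ring
    rw [he, hwm, hn']
    push_cast
    linarith
  have hc1m : (0:ℝ) < (1/c)^m := pow_pos (one_div_pos.mpr hc0) m
  have hc2m : (0:ℝ) < (2/c)^m := pow_pos (div_pos two_pos hc0) m
  set C : ℝ := 3^(d+1) + 3^n' * (2/c)^m * (2:ℝ)^(w*(m:ℝ)) + 3^n' * (1/c)^m with hC
  have h2wm : (0:ℝ) < (2:ℝ)^(w*(m:ℝ)) := Real.rpow_pos_of_pos two_pos _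
  have hC2 : (0:ℝ) < 3^n' * (2/c)^m * (2:ℝ)^(w*(m:ℝ)) :=
    mul_pos (mul_pos (by positivity) hc2m) h2wm
  have hC3 : (0:ℝ) < 3^n' * (1/c)^m := mul_pos (by positivity) hc1m
  have hC0 : 0 < C := by
    have h31 : (0:ℝ) < 3^(d+1) := by positivity
    rw [hC]; linarith
  refine ⟨C, hC0, ?_⟩
  intro Q hQ δ hδ
  have hQ1 : (1:ℝ) ≤ Q := by exact_mod_cast hQ
  have hQ0 : (0:ℝ) < Q := lt_of_lt_of_le one_pos hQ1
  have hQrp : (0:ℝ) < (Q:ℝ) ^ ((m:ℝ) * σ + ε) := Real.rpow_pos_of_pos hQ0 _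
  set 𝒮 : Set (ℤ × (Fin d → ℤ)) := {p : ℤ × (Fin d → ℤ) |
    intDist (Matrix.vecMul (Fin.cons (p.1 : ℝ) (fun i => (p.2 i : ℝ) + θ1 i)) A - θ2) < δ ∧
    |p.1| < (Q : ℤ) ∧ ∀ i, |p.2 i| < (Q : ℤ)} with h𝒮
  have hcount : countNA A Q δ θ1 θ2 = 𝒮.ncard := rfl
  set box : Finset (ℤ × (Fin d → ℤ)) :=
    Finset.Icc (-(Q:ℤ)) Q ×ˢ Fintype.piFinset (fun _ : Fin d => Finset.Icc (-(Q:ℤ)) (Q:ℤ))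
    with hbox
  have hsubbox : 𝒮 ⊆ ↑box := by
    intro p hp
    obtain ⟨_, h1, h2⟩ := hp
    have ha1 := abs_lt.mp h1
    rw [hbox]
    rw [Finset.mem_coe, Finset.mem_product, Finset.mem_Icc, Fintype.mem_piFinset]
    refine ⟨⟨by linarith [ha1.1], by linarith [ha1.2]⟩, fun i => ?_⟩
    have ha2 := abs_lt.mp (h2 i)
    rw [Finset.mem_Icc]
    exact ⟨by linarith [ha2.1], by linarith [ha2.2]⟩
  have hfin : 𝒮.Finite := Set.Finite.subset box.finite_toSet hsubbox
  have hIccCard : (Finset.Icc (-(Q:ℤ)) (Q:ℤ)).card = 2*Q+1 := by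
    rw [Int.card_Icc]
    omega
  have hboxcard : box.card = (2*Q+1)^(d+1) := by
    rw [hbox, Finset.card_product, Fintype.card_piFinset]
    simp only [hIccCard, Finset.prod_const, Finset.card_univ, Fintype.card_fin]
    ring
  have hNbox : (𝒮.ncard : ℝ) ≤ (3*(Q:ℝ))^(d+1) := by
    have h1 : 𝒮.ncard ≤ box.card := by
      have := Set.ncard_le_ncard hsubbox box.finite_toSet
      rwa [Set.ncard_coe_finset] at this
    calc (𝒮.ncard : ℝ) ≤ (box.card : ℝ) := by exact_mod_cast h1
      _ = ((2*Q+1 : ℕ) : ℝ)^(d+1) := by rw [hboxcard]; push_cast; ring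
      _ ≤ (3*(Q:ℝ))^(d+1) := by
          apply pow_le_pow_left₀ (by positivity)
          push_cast
          linarith
  have hQnat : ((Q:ℝ))^(d+1) ≤ (Q:ℝ) ^ ((m:ℝ) * σ + ε) := by
    rw [← Real.rpow_natCast (Q:ℝ) (d+1)]
    apply Real.rpow_le_rpow_of_exponent_le hQ1
    push_cast
    linarith
  rw [hcount]
  by_cases hδ1 : 1 ≤ δ
  · -- trivial case δ ≥ 1
    apply le_max_of_le_right
    calc (𝒮.ncard : ℝ) ≤ (3*(Q:ℝ))^(d+1) := hNbox
      _ = 3^(d+1) * (Q:ℝ)^(d+1) := mul_pow 3 _ (d+1)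
      _ ≤ 3^(d+1) * (Q:ℝ) ^ ((m:ℝ) * σ + ε) :=
          mul_le_mul_of_nonneg_left hQnat (by positivity)
      _ = 3^(d+1) * 1 * (Q:ℝ) ^ ((m:ℝ) * σ + ε) := by ring
      _ ≤ C * δ^m * (Q:ℝ) ^ ((m:ℝ) * σ + ε) := by
          apply mul_le_mul_of_nonneg_right _ hQrp.le
          apply mul_le_mul _ (one_le_pow₀ hδ1) (by norm_num) hC0.le
          rw [hC]
          linarith [hC2, hC3]
  · push_neg at hδ1
    -- main case δ < 1
    set X : ℝ := c / (δ * (Q:ℝ)^w) with hX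
    have hQw0 : (0:ℝ) < (Q:ℝ)^w := Real.rpow_pos_of_pos hQ0 _
    have hX0 : 0 < X := div_pos hc0 (by positivity)
    have h1w : (0:ℝ) < 1 + w := by linarith
    set lam : ℝ := min 1 (X ^ (1/(1+w))) with hlam
    have hlam0 : 0 < lam := lt_min one_pos (Real.rpow_pos_of_pos hX0 _)
    have hlam1 : lam ≤ 1 := min_le_left _ _
    have hlampow : lam ^ (1+w) ≤ X := by
      calc lam ^ (1+w) ≤ (X ^ (1/(1+w))) ^ (1+w) :=
            Real.rpow_le_rpow hlam0.le (min_le_right _ _) h1w.le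
        _ = X := by
            rw [← Real.rpow_mul hX0.le, one_div_mul_cancel (ne_of_gt h1w), Real.rpow_one]
    have hkey : lam * δ ≤ c * (lam * (Q:ℝ)) ^ (-w) := by
      have hlq : (0:ℝ) < lam * Q := mul_pos hlam0 hQ0
      have hlqw : (0:ℝ) < (lam*(Q:ℝ))^w := Real.rpow_pos_of_pos hlq _
      rw [Real.rpow_neg hlq.le, mul_comm c, inv_mul_eq_div, le_div_iff₀ hlqw]
      have e1 : lam * δ * (lam*(Q:ℝ))^w = lam^((1:ℝ)+w) * (δ * (Q:ℝ)^w) := by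
        rw [Real.mul_rpow hlam0.le hQ0.le, Real.rpow_add hlam0 1 w, Real.rpow_one]
        ring
      rw [e1]
      have e2 : X * (δ * (Q:ℝ)^w) = c := by
        rw [hX]; field_simp
      calc lam^((1:ℝ)+w) * (δ * (Q:ℝ)^w) ≤ X * (δ * (Q:ℝ)^w) :=
            mul_le_mul_of_nonneg_right hlampow (by positivity)
        _ = c := e2
    -- packing
    set W : Fin (d+1+m) → ℝ :=
      Fin.append (fun _ : Fin (d+1) => (Q:ℝ)) (fun _ : Fin m => δ) with hW
    have hWpos : ∀ i, 0 < W i := by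
      rw [hW]
      exact append_forall₂ (fun _ y => 0 < y) (fun _ => (Q:ℝ)) (fun _ => δ)
        (fun _ => (Q:ℝ)) (fun _ => δ) (fun _ => hQ0) (fun _ => hδ)
    set Xrow : (ℤ × (Fin d → ℤ)) → Fin m → ℝ := fun p =>
      Matrix.vecMul (Fin.cons (p.1 : ℝ) (fun i => (p.2 i : ℝ) + θ1 i)) A - θ2 with hXrow
    set ctr : (ℤ × (Fin d → ℤ)) → Fin (d+1+m) → ℝ := fun p =>
      Fin.append (Fin.cons (p.1:ℝ) (fun i => (p.2 i : ℝ)))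
        (fun j => Xrow p j - (round (Xrow p j) : ℝ)) with hctr
    have hcenter : ∀ p ∈ hfin.toFinset, ∀ i, |ctr p i| < W i := by
      intro p hp
      have hpS : p ∈ 𝒮 := hfin.mem_toFinset.mp hp
      obtain ⟨hd', h1, h2⟩ := hpS
      rw [hctr, hW]
      apply append_forall₂ (fun x y => |x| < y)
      · intro i
        refine Fin.cases ?_ ?_ i
        · rw [Fin.cons_zero, ← Int.cast_abs]
          exact_mod_cast h1
        · intro i
          rw [Fin.cons_succ, ← Int.cast_abs]
          exact_mod_cast h2 i
      · intro j
        exact coord_le_of_intDist hd' j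
    have hsep : ∀ p ∈ hfin.toFinset, ∀ p' ∈ hfin.toFinset, p ≠ p' →
        ∃ i, lam * W i ≤ |ctr p i - ctr p' i| := by
      intro p hp p' hp' hpp
      by_contra hcon
      push_neg at hcon
      set z : Fin (d+1) → ℤ := Fin.cons (p.1 - p'.1) (fun i => p.2 i - p'.2 i) with hz
      have hz0 : z ≠ 0 := cons_diff_ne_zero hpp
      have hb1 : ∀ i : Fin (d+1), |(z i : ℝ)| < lam * Q := by
        intro i
        have hci := hcon (Fin.castAdd m i)
        simp only [hctr, hW, Fin.append_left] at hci
        have hv : ((Fin.cons (p.1:ℝ) (fun i => (p.2 i : ℝ)) : Fin (d+1) → ℝ) i)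
            - ((Fin.cons (p'.1:ℝ) (fun i => (p'.2 i : ℝ)) : Fin (d+1) → ℝ) i) = (z i : ℝ) := by
          refine Fin.cases ?_ ?_ i
          · rw [hz]; simp only [Fin.cons_zero]; push_cast; ring
          · intro i'; rw [hz]; simp only [Fin.cons_succ]; push_cast; ring
        rw [← hv]
        exact hci
      have hb2 : ∀ j : Fin m, |(Xrow p j - (round (Xrow p j) : ℝ))
          - (Xrow p' j - (round (Xrow p' j) : ℝ))| < lam * δ := by
        intro j
        have := hcon (Fin.natAdd (d+1) j)
        simp only [hctr, hW, Fin.append_right] at this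
        exact this
      have hzn : intNorm z ≤ lam * Q :=
        intNorm_le_of_forall (by positivity) (fun i => (hb1 i).le)
      have hzA : Matrix.vecMul (fun j => (z j : ℝ)) A = Xrow p - Xrow p' := by
        rw [hXrow, hz]
        exact (vecMul_diff A θ1 θ2 p p').symm
      have hzd : intDist (Matrix.vecMul (fun j => (z j:ℝ)) A) < lam * δ := by
        apply intDist_lt_of_forall
          (p := fun j => round (Xrow p j) - round (Xrow p' j)) (by positivity)
        intro j
        have e3 : Matrix.vecMul (fun j => (z j:ℝ)) A j
            - ((round (Xrow p j) - round (Xrow p' j) : ℤ) : ℝ)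
            = (Xrow p j - (round (Xrow p j) : ℝ)) - (Xrow p' j - (round (Xrow p' j) : ℝ)) := by
          rw [hzA]
          simp only [Pi.sub_apply]
          push_cast
          ring
        rw [e3]
        exact hb2 j
      have hchain := hbad z hz0
      have hanti : c * (lam * (Q:ℝ)) ^ (-w) ≤ c * intNorm z ^ (-w) :=
        mul_le_mul_of_nonneg_left (rpow_neg_anti (intNorm_pos hz0) hzn hw0.le) hc0.le
      linarith [hkey, hanti, hchain, hzd]
    have hpack := packing_lemma hfin.toFinset ctr W lam hlam0 hlam1 hWpos hcenter hsep
    have hcard_eq : (hfin.toFinset.card : ℝ) = (𝒮.ncard : ℝ) := by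
      rw [Set.ncard_eq_toFinset_card 𝒮 hfin]
    have hprodL : ∏ i, (lam * W i) = (lam * (Q:ℝ))^(d+1) * (lam * δ)^m := by
      rw [hW, Fin.prod_univ_add (f := fun i => lam *
        (Fin.append (fun _ : Fin (d+1) => (Q:ℝ)) (fun _ : Fin m => δ)) i)]
      simp [Fin.append_left, Fin.append_right]
    have hprodR : ∏ i, ((3:ℝ) * W i) = (3 * (Q:ℝ))^(d+1) * (3 * δ)^m := by
      rw [hW, Fin.prod_univ_add (f := fun i => (3:ℝ) *
        (Fin.append (fun _ : Fin (d+1) => (Q:ℝ)) (fun _ : Fin m => δ)) i)]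
      simp [Fin.append_left, Fin.append_right]
    rw [hprodL, hprodR, hcard_eq] at hpack
    have hposQδ : (0:ℝ) < (Q:ℝ)^(d+1) * δ^m := by positivity
    have hNlam : (𝒮.ncard : ℝ) * lam^(d+1+m) ≤ 3^(d+1+m) := by
      apply le_of_mul_le_mul_right _ hposQδ
      calc (𝒮.ncard : ℝ) * lam^(d+1+m) * ((Q:ℝ)^(d+1) * δ^m)
          = (𝒮.ncard : ℝ) * ((lam * (Q:ℝ))^(d+1) * (lam * δ)^m) := by
            rw [mul_pow, mul_pow, pow_add]; ring
        _ ≤ (3 * (Q:ℝ))^(d+1) * (3 * δ)^m := hpack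
        _ = 3^(d+1+m) * ((Q:ℝ)^(d+1) * δ^m) := by
            rw [mul_pow, mul_pow, pow_add]; ring
    by_cases hXge : 1 ≤ X
    · -- λ = 1 case
      have hlameq : lam = 1 := min_eq_left (Real.one_le_rpow hXge (by positivity))
      rw [hlameq, one_pow, mul_one] at hNlam
      by_cases hN1 : 𝒮.ncard ≤ 1
      · apply le_max_of_le_left
        have hπ : (1:ℝ) ≤ Real.pi ^ (2*m) := one_le_pow₀ (by linarith [Real.pi_gt_three])
        calc ((𝒮.ncard : ℕ):ℝ) ≤ 1 := by exact_mod_cast hN1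
          _ ≤ _ := hπ
      · push_neg at hN1
        obtain ⟨p, p', hp, hp', hpp⟩ := (Set.one_lt_ncard_iff hfin).mp hN1
        set z : Fin (d+1) → ℤ := Fin.cons (p.1 - p'.1) (fun i => p.2 i - p'.2 i) with hz
        have hz0 : z ≠ 0 := cons_diff_ne_zero hpp
        obtain ⟨hdist, h1, h2⟩ := hp
        obtain ⟨hdist', h1', h2'⟩ := hp'
        have hzA : Matrix.vecMul (fun j => (z j : ℝ)) A = Xrow p - Xrow p' := by
          rw [hXrow, hz]
          exact (vecMul_diff A θ1 θ2 p p').symm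
        have hintz : intDist (Matrix.vecMul (fun j => (z j:ℝ)) A) < 2*δ := by
          rw [hzA]
          calc intDist (Xrow p - Xrow p')
              ≤ intDist (Xrow p) + intDist (Xrow p') := intDist_sub_le _ _
            _ < 2*δ := by
                rw [hXrow]
                simp only []
                linarith [hdist, hdist']
        have hzn : intNorm z ≤ 2*(Q:ℝ) := by
          apply intNorm_le_of_forall (by positivity)
          intro i
          refine Fin.cases ?_ ?_ i
          · rw [hz]
            simp only [Fin.cons_zero, ← Int.cast_abs]
            have hu1 := abs_lt.mp h1
            have hu2 := abs_lt.mp h1'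
            have : |p.1 - p'.1| ≤ 2*(Q:ℤ) := abs_le.mpr ⟨by linarith [hu1.1, hu2.2], by linarith [hu1.2, hu2.1]⟩
            exact_mod_cast this
          · intro i
            rw [hz]
            simp only [Fin.cons_succ, ← Int.cast_abs]
            have hu1 := abs_lt.mp (h2 i)
            have hu2 := abs_lt.mp (h2' i)
            have : |p.2 i - p'.2 i| ≤ 2*(Q:ℤ) := abs_le.mpr ⟨by linarith [hu1.1, hu2.2], by linarith [hu1.2, hu2.1]⟩
            exact_mod_cast this
        have hc2Q : c * (2*(Q:ℝ))^(-w) ≤ intDist (Matrix.vecMul (fun j => (z j:ℝ)) A) := by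
          refine le_trans ?_ (hbad z hz0)
          exact mul_le_mul_of_nonneg_left
            (rpow_neg_anti (intNorm_pos hz0) hzn hw0.le) hc0.le
        have hδlow : c/2 * (2*(Q:ℝ))^(-w) < δ := by linarith
        have h2Qw : (0:ℝ) < (2*(Q:ℝ))^(-w) := Real.rpow_pos_of_pos (by positivity) _
        have hδm : (c/2 * (2*(Q:ℝ))^(-w))^m ≤ δ^m :=
          pow_le_pow_left₀ (mul_pos (half_pos hc0) h2Qw).le hδlow.le m
        have hA1 : ((2*(Q:ℝ))^(-w))^m = (2*(Q:ℝ))^(-(w*(m:ℝ))) := by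
          rw [← Real.rpow_natCast ((2*(Q:ℝ))^(-w)) m, ← Real.rpow_mul (by positivity)]
          ring_nf
        have hs1 : (c/2)^m * (2*(Q:ℝ))^(-(w*(m:ℝ))) ≤ δ^m := by
          calc (c/2)^m * (2*(Q:ℝ))^(-(w*(m:ℝ)))
              = (c/2 * (2*(Q:ℝ))^(-w))^m := by rw [mul_pow, hA1]
            _ ≤ δ^m := hδm
        have hs2 : (2*(Q:ℝ))^(-(w*(m:ℝ)))
            = ((2:ℝ)^(w*(m:ℝ)))⁻¹ * ((Q:ℝ)^(w*(m:ℝ)))⁻¹ := by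
          rw [Real.rpow_neg (by positivity), Real.mul_rpow (by norm_num) hQ0.le, mul_inv]
        have h9 : ((Q:ℝ)^(w*(m:ℝ)))⁻¹ * (Q:ℝ)^((m:ℝ)*σ+ε) = (Q:ℝ)^(ε/2) := by
          rw [← Real.rpow_neg hQ0.le, ← Real.rpow_add hQ0]
          congr 1
          rw [hwm]
          ring
        have h8 : (c/2)^m * ((2:ℝ)^(w*(m:ℝ)))⁻¹ * (Q:ℝ)^(ε/2)
            ≤ δ^m * (Q:ℝ)^((m:ℝ)*σ+ε) := by
          calc (c/2)^m * ((2:ℝ)^(w*(m:ℝ)))⁻¹ * (Q:ℝ)^(ε/2)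
              = (c/2)^m * (((2:ℝ)^(w*(m:ℝ)))⁻¹ * ((Q:ℝ)^(w*(m:ℝ)))⁻¹) * (((Q:ℝ)^(w*(m:ℝ))) * (Q:ℝ)^(ε/2)) := by
                field_simp
            _ = (c/2)^m * (2*(Q:ℝ))^(-(w*(m:ℝ))) * (((Q:ℝ)^(w*(m:ℝ))) * (Q:ℝ)^(ε/2)) := by
                rw [hs2]
            _ = (c/2)^m * (2*(Q:ℝ))^(-(w*(m:ℝ))) * (Q:ℝ)^((m:ℝ)*σ+ε) := by
                congr 1
                rw [← Real.rpow_add hQ0]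
                congr 1
                rw [hwm]
                ring
            _ ≤ δ^m * (Q:ℝ)^((m:ℝ)*σ+ε) := mul_le_mul_of_nonneg_right hs1 hQrp.le
        have hfinal : (c/2)^m * ((2:ℝ)^(w*(m:ℝ)))⁻¹ ≤ δ^m * (Q:ℝ)^((m:ℝ)*σ+ε) := by
          have h10 : (c/2)^m * ((2:ℝ)^(w*(m:ℝ)))⁻¹
              ≤ (c/2)^m * ((2:ℝ)^(w*(m:ℝ)))⁻¹ * (Q:ℝ)^(ε/2) := by
            have h11 : (1:ℝ) ≤ (Q:ℝ)^(ε/2) := Real.one_le_rpow hQ1 (by positivity)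
            have h12 : (0:ℝ) ≤ (c/2)^m * ((2:ℝ)^(w*(m:ℝ)))⁻¹ :=
              mul_nonneg (pow_nonneg (half_pos hc0).le m) (inv_nonneg.mpr h2wm.le)
            exact le_mul_of_one_le_right h12 h11
          linarith
        apply le_max_of_le_right
        have hCC2 : 3^n' * (2/c)^m * (2:ℝ)^(w*(m:ℝ)) ≤ C := by
          have h31 : (0:ℝ) < 3^(d+1) := by positivity
          rw [hC]; linarith [hC3]
        have e5 : ((2:ℝ)/c)^m * (c/2)^m = 1 := by
          rw [← mul_pow]
          have : (2:ℝ)/c * (c/2) = 1 := by field_simp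
          rw [this, one_pow]
        have e6 : (2:ℝ)^(w*(m:ℝ)) * ((2:ℝ)^(w*(m:ℝ)))⁻¹ = 1 := mul_inv_cancel₀ (ne_of_gt h2wm)
        calc (𝒮.ncard:ℝ) ≤ 3^(d+1+m) := hNlam
          _ = 3^n' * (((2:ℝ)/c)^m * (c/2)^m) * ((2:ℝ)^(w*(m:ℝ)) * ((2:ℝ)^(w*(m:ℝ)))⁻¹) := by
              rw [e5, e6, hn']; ring
          _ = (3^n' * (2/c)^m * (2:ℝ)^(w*(m:ℝ))) * ((c/2)^m * ((2:ℝ)^(w*(m:ℝ)))⁻¹) := by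
              ring
          _ ≤ (3^n' * (2/c)^m * (2:ℝ)^(w*(m:ℝ))) * (δ^m * (Q:ℝ)^((m:ℝ)*σ+ε)) :=
              mul_le_mul_of_nonneg_left hfinal hC2.le
          _ ≤ C * (δ^m * (Q:ℝ)^((m:ℝ)*σ+ε)) :=
              mul_le_mul_of_nonneg_right hCC2 (mul_nonneg (pow_nonneg hδ.le m) hQrp.le)
          _ = C * δ^m * (Q:ℝ)^((m:ℝ)*σ+ε) := by ring
    · -- λ < 1 case
      push_neg at hXge
      have hlameq : lam = X ^ (1/(1+w)) :=
        min_eq_right (Real.rpow_le_one hX0.le hXge.le (by positivity))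
      set a : ℝ := (n':ℝ)/(1+w) with ha
      set Y : ℝ := δ * (Q:ℝ)^w / c with hY
      have hXY : X⁻¹ = Y := by rw [hX, hY, inv_div]
      have hY1 : 1 < Y := by
        rw [← hXY]
        exact one_lt_inv_iff₀.mpr ⟨hX0, hXge⟩
      have hY0 : (0:ℝ) < Y := lt_trans one_pos hY1
      have hl2 : lam^(n' : ℕ) = X ^ a := by
        rw [hlameq, ← Real.rpow_natCast (X ^ (1/(1+w))) n', ← Real.rpow_mul hX0.le]
        congr 1
        rw [ha]
        field_simp
      have hXa : (0:ℝ) < X ^ a := Real.rpow_pos_of_pos hX0 _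
      have hNle : (𝒮.ncard:ℝ) ≤ 3^n' * Y ^ a := by
        have h13 : (𝒮.ncard:ℝ) * X ^ a ≤ 3^n' := by
          rw [← hl2, hn']
          exact hNlam
        have h14 : (𝒮.ncard:ℝ) = (𝒮.ncard:ℝ) * X ^ a * (X ^ a)⁻¹ := by
          field_simp
        rw [h14]
        calc (𝒮.ncard:ℝ) * X ^ a * (X ^ a)⁻¹ ≤ 3^n' * (X ^ a)⁻¹ :=
              mul_le_mul_of_nonneg_right h13 (inv_nonneg.mpr hXa.le)
          _ = 3^n' * Y ^ a := by
              rw [← Real.inv_rpow hX0.le, hXY]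
      have ham : a ≤ (m:ℝ) := by
        rw [ha, div_le_iff₀ h1w]
        linarith [hβm]
      have hYa : Y ^ a ≤ Y ^ ((m:ℝ)) := Real.rpow_le_rpow_of_exponent_le hY1.le ham
      have hYm : Y ^ ((m:ℝ)) = Y^(m:ℕ) := Real.rpow_natCast Y m
      have hYexp : Y^(m:ℕ) = δ^m * ((Q:ℝ)^w)^m * (1/c)^m := by
        rw [hY, div_eq_mul_one_div, mul_pow, mul_pow]
      have hQwm : ((Q:ℝ)^w)^m ≤ (Q:ℝ)^((m:ℝ)*σ+ε) := by
        rw [← Real.rpow_natCast ((Q:ℝ)^w) m, ← Real.rpow_mul hQ0.le]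
        apply Real.rpow_le_rpow_of_exponent_le hQ1
        rw [hwm]
        linarith
      apply le_max_of_le_right
      have hCC3 : 3^n' * (1/c)^m ≤ C := by
        have h31 : (0:ℝ) < 3^(d+1) := by positivity
        rw [hC]; linarith [hC2]
      calc (𝒮.ncard:ℝ) ≤ 3^n' * Y^a := hNle
        _ ≤ 3^n' * Y^(m:ℕ) := by
            rw [← hYm]
            exact mul_le_mul_of_nonneg_left hYa (by positivity)
        _ = 3^n' * (1/c)^m * (δ^m * ((Q:ℝ)^w)^m) := by rw [hYexp]; ring
        _ ≤ 3^n' * (1/c)^m * (δ^m * (Q:ℝ)^((m:ℝ)*σ+ε)) := by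
            apply mul_le_mul_of_nonneg_left _ hC3.le
            exact mul_le_mul_of_nonneg_left hQwm (pow_pos hδ m).le
        _ ≤ C * (δ^m * (Q:ℝ)^((m:ℝ)*σ+ε)) :=
            mul_le_mul_of_nonneg_right hCC3 (mul_nonneg (pow_nonneg hδ.le m) hQrp.le)
        _ = C * δ^m * (Q:ℝ)^((m:ℝ)*σ+ε) := by ring
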